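/- For every t ∈ ℂ with t ≠ 0, the bracket on ℂ⁴ given by [e₁,e₂] = e₃, [e₂,e₁] = −e₃, [e₁,e₃] = −e₂, [e₃,e₁] = e₂, [e₂,e₃] = e₄ + t·e₁, [e₃,e₂] = −e₄ − t·e₁ (the deformation of the diamond Lie algebra 𝔡 along the 2-cocycle φ₂(e₂,e₃) = e₁, φ₂(e₃,e₂) = −e₁) is isomorphic to the Lie algebra sl(2,ℂ) ⊕ ℂ on ℂ⁴ with bracket [e₁,e₂] = e₃, [e₂,e₁] = −e₃, [e₂,e₃] = 2e₂, [e₃,e₂] = −2e₂, [e₁,e₃] = −2e₁, [e₃,e₁] = 2e₁, and all brackets involving e₄ equal to zero. -/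

import Mathlib

/-- The deformation of the diamond Lie algebra on `ℂ⁴` along the 2-cocycle
`φ₂(e₂,e₃) = e₁`, `φ₂(e₃,e₂) = -e₁`: the brackets `[e₁,e₂] = e₃`,
`[e₂,e₁] = -e₃`, `[e₁,e₃] = -e₂`, `[e₃,e₁] = e₂`, `[e₂,e₃] = e₄ + t·e₁`,
`[e₃,e₂] = -e₄ - t·e₁`, in coordinates. -/
def diamondDeformed2 (t : ℂ) (x y : Fin 4 → ℂ) : Fin 4 → ℂ :=
  ![t * (x 1 * y 2 - x 2 * y 1),
    x 2 * y 0 - x 0 * y 2,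
    x 0 * y 1 - x 1 * y 0,
    x 1 * y 2 - x 2 * y 1]

/-- The bracket of the Lie algebra `sl(2,ℂ) ⊕ ℂ` on `ℂ⁴`: `[e₁,e₂] = e₃`,
`[e₂,e₁] = -e₃`, `[e₂,e₃] = 2e₂`, `[e₃,e₂] = -2e₂`, `[e₁,e₃] = -2e₁`,
`[e₃,e₁] = 2e₁`, all brackets involving `e₄` zero, in coordinates. -/
def sl2PlusCBracket (x y : Fin 4 → ℂ) : Fin 4 → ℂ :=
  ![2 * (x 2 * y 0 - x 0 * y 2),
    2 * (x 1 * y 2 - x 2 * y 1),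
    x 0 * y 1 - x 1 * y 0,
    0]

/-!
The vector `e₄` is central, and `u = t e₁ + e₄`, `e₂`, `e₃` span the derived algebra, with
`[e₂,e₃] = u`, `[e₃,u] = t e₂`, `[u,e₂] = t e₃`. For `t ≠ 0` this is a form of
`so(3,ℂ) ≅ sl(2,ℂ)` and `e₁ = (u - e₄)/t`, so the algebra is `sl(2,ℂ) ⊕ ℂ e₄`.
The isomorphism below diagonalises `ad u`: it sends `e₂ + i e₃ ↦ E₂`, `e₂ - i e₃ ↦ -t E₁`,
`u ↦ (i t / 2) E₃` and `e₄ ↦ E₄`, where `Eₖ` is the standard basis of `sl(2,ℂ) ⊕ ℂ`.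
-/

open Complex

noncomputable def diamondToSl2PlusC (t : ℂ) : (Fin 4 → ℂ) →ₗ[ℂ] (Fin 4 → ℂ) where
  toFun x := ![-(t / 2) * (x 1 + I * x 2), (x 1 - I * x 2) / 2, I * x 0 / 2, x 3 - x 0 / t]
  map_add' x y := by funext i; fin_cases i <;> simp <;> ring
  map_smul' c x := by funext i; fin_cases i <;> simp <;> ring

noncomputable def sl2PlusCToDiamond (t : ℂ) : (Fin 4 → ℂ) →ₗ[ℂ] (Fin 4 → ℂ) where
  toFun y := ![-2 * I * y 2, y 1 - y 0 / t, I * (y 1 + y 0 / t), y 3 - 2 * I * y 2 / t]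
  map_add' x y := by funext i; fin_cases i <;> simp <;> ring
  map_smul' c y := by funext i; fin_cases i <;> simp <;> ring

section

variable {t : ℂ}

theorem sl2PlusCToDiamond_comp_diamondToSl2PlusC (ht : t ≠ 0) :
    (sl2PlusCToDiamond t).comp (diamondToSl2PlusC t) = .id := by
  refine LinearMap.ext fun x => funext fun i => ?_
  fin_cases i <;> simp [sl2PlusCToDiamond, diamondToSl2PlusC] <;> grind [I_sq]

theorem diamondToSl2PlusC_comp_sl2PlusCToDiamond (ht : t ≠ 0) :
    (diamondToSl2PlusC t).comp (sl2PlusCToDiamond t) = .id := by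
  refine LinearMap.ext fun y => funext fun i => ?_
  fin_cases i <;> simp [sl2PlusCToDiamond, diamondToSl2PlusC] <;> grind [I_sq]

theorem diamondToSl2PlusC_map_bracket (ht : t ≠ 0) (x y : Fin 4 → ℂ) :
    diamondToSl2PlusC t (diamondDeformed2 t x y) =
      sl2PlusCBracket (diamondToSl2PlusC t x) (diamondToSl2PlusC t y) := by
  funext i
  fin_cases i <;> simp [diamondToSl2PlusC, diamondDeformed2, sl2PlusCBracket] <;> grind [I_sq]

end

/-- For every `t ≠ 0`, the deformation of the diamond Lie algebra `𝔡` along the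
2-cocycle `φ₂(e₂,e₃) = e₁`, `φ₂(e₃,e₂) = -e₁` is isomorphic to `sl(2,ℂ) ⊕ ℂ`. -/
theorem diamond_deformation_iso_sl2_plus_C :
    ∀ t : ℂ, t ≠ 0 →
      ∃ T : (Fin 4 → ℂ) ≃ₗ[ℂ] (Fin 4 → ℂ),
        ∀ x y : Fin 4 → ℂ, T (diamondDeformed2 t x y) = sl2PlusCBracket (T x) (T y) := by
  intro t ht
  exact ⟨.ofLinearMap _ _ (diamondToSl2PlusC_comp_sl2PlusCToDiamond ht)
    (sl2PlusCToDiamond_comp_diamondToSl2PlusC ht), diamondToSl2PlusC_map_bracket ht⟩
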